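/- If M is a subset of Euclidean n-space contained in the bounding voxel V₀, then the limit of the subdivision approximations equals the closure of M exactly: ⋂_{t ∈ ℕ} C_t(M) = closure(M). -/

import Mathlib

open Set Metric Filter MeasureTheory ENNReal

noncomputable section

variable {n : ℕ}

/-- The bounding voxel `V₀ = {x | ∀ i, a i ≤ x i ∧ x i < b i}`. -/
def boundingVoxel (a b : EuclideanSpace ℝ (Fin n)) : Set (EuclideanSpace ℝ (Fin n)) :=
  {x | ∀ i, a i ≤ x i ∧ x i < b i}

/-- The level-`t` dyadic sub-voxel `D_t(k)`. -/
def subVoxel (a b : EuclideanSpace ℝ (Fin n)) (t : ℕ) (k : Fin n → ℕ) :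
    Set (EuclideanSpace ℝ (Fin n)) :=
  {x | ∀ i, a i + (k i : ℝ) * (b i - a i) / 2 ^ t ≤ x i ∧
            x i < a i + ((k i : ℝ) + 1) * (b i - a i) / 2 ^ t}

/-- The retained indices `Q_t(M)`: admissible `k` whose closed sub-voxel meets `M`. -/
def retained (a b : EuclideanSpace ℝ (Fin n)) (t : ℕ) (M : Set (EuclideanSpace ℝ (Fin n))) :
    Set (Fin n → ℕ) :=
  {k | (∀ i, k i < 2 ^ t) ∧ (closure (subVoxel a b t k) ∩ M).Nonempty}

/-- The level-`t` approximation `C_t(M)`: union of the closures of retained sub-voxels. -/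
def approx (a b : EuclideanSpace ℝ (Fin n)) (t : ℕ) (M : Set (EuclideanSpace ℝ (Fin n))) :
    Set (EuclideanSpace ℝ (Fin n)) :=
  ⋃ k ∈ retained a b t M, closure (subVoxel a b t k)

/-!
Every point of `M ⊆ V₀` lies in some level-`t` sub-voxel, whose closure is then retained, so
`M ⊆ C_t(M)`; as a finite union of closed sets `C_t(M)` is closed, hence contains `closure M`.
Conversely, a retained closed sub-voxel meets `M` and has diameter at most `dist a b / 2 ^ t`,
so every point of `C_t(M)` lies within `dist a b / 2 ^ t` of `M`; a point of every `C_t(M)` is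
therefore in `closure M`.
-/

lemma exists_lt_two_pow_mem_dyadic {a b x : ℝ} (hax : a ≤ x) (hxb : x < b) (t : ℕ) :
    ∃ k : ℕ, k < 2 ^ t ∧ a + k * (b - a) / 2 ^ t ≤ x ∧ x < a + (k + 1) * (b - a) / 2 ^ t := by
  obtain ⟨h, rfl⟩ : ∃ h : ℝ, b = a + 2 ^ t * h := ⟨(b - a) / 2 ^ t, by field_simp; ring⟩
  have hh : 0 < h := pos_of_mul_pos_right (by linarith : 0 < (2 : ℝ) ^ t * h) (by positivity)
  have hcell : (a + 2 ^ t * h - a) / 2 ^ t = h := by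
    rw [add_sub_cancel_left, mul_div_cancel_left₀ _ (by positivity)]
  have hy : 0 ≤ (x - a) / h := div_nonneg (sub_nonneg.2 hax) hh.le
  have hyh : (x - a) / h * h = x - a := div_mul_cancel₀ _ hh.ne'
  have hk_le := mul_le_mul_of_nonneg_right (Nat.floor_le hy) hh.le
  have hk_lt := mul_lt_mul_of_pos_right (Nat.lt_floor_add_one ((x - a) / h)) hh
  refine ⟨⌊(x - a) / h⌋₊, ?_, ?_, ?_⟩
  · rw [Nat.floor_lt hy, div_lt_iff₀ hh]
    push_cast
    linarith
  all_goals rw [mul_div_assoc, hcell]; linarith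

lemma exists_mem_subVoxel {a b x : EuclideanSpace ℝ (Fin n)} (hx : x ∈ boundingVoxel a b)
    (t : ℕ) : ∃ k : Fin n → ℕ, (∀ i, k i < 2 ^ t) ∧ x ∈ subVoxel a b t k := by
  choose k hk hmem using fun i => exists_lt_two_pow_mem_dyadic (hx i).1 (hx i).2 t
  exact ⟨k, hk, hmem⟩

lemma closure_subVoxel_subset (a b : EuclideanSpace ℝ (Fin n)) (t : ℕ) (k : Fin n → ℕ) :
    closure (subVoxel a b t k) ⊆ {x | ∀ i, x i ∈
      Icc (a i + k i * (b i - a i) / 2 ^ t) (a i + (k i + 1) * (b i - a i) / 2 ^ t)} := by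
  refine closure_minimal (fun x hx i => ⟨(hx i).1, (hx i).2.le⟩) ?_
  rw [← iInter_ofPred]
  exact isClosed_iInter fun i => isClosed_Icc.preimage (EuclideanSpace.proj i).continuous

lemma dist_le_of_mem_closure_subVoxel {a b x y : EuclideanSpace ℝ (Fin n)} {t : ℕ}
    {k : Fin n → ℕ} (hx : x ∈ closure (subVoxel a b t k)) (hy : y ∈ closure (subVoxel a b t k)) :
    dist x y ≤ dist a b / 2 ^ t := by
  have hcoord : ∀ i, dist (x i) (y i) ≤ dist (a i) (b i) / 2 ^ t := fun i =>
    calc dist (x i) (y i)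
        ≤ a i + (k i + 1) * (b i - a i) / 2 ^ t - (a i + k i * (b i - a i) / 2 ^ t) :=
          Real.dist_le_of_mem_Icc (closure_subVoxel_subset a b t k hx i)
            (closure_subVoxel_subset a b t k hy i)
      _ = (b i - a i) / 2 ^ t := by ring
      _ ≤ dist (a i) (b i) / 2 ^ t := by
          gcongr
          rw [dist_comm]
          exact le_abs_self _
  calc dist x y = √(∑ i, dist (x i) (y i) ^ 2) := EuclideanSpace.dist_eq x y
    _ ≤ √(∑ i, (dist (a i) (b i) / 2 ^ t) ^ 2) := by gcongr with i; exact hcoord i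
    _ = dist a b / 2 ^ t := by
        simp_rw [div_pow, ← Finset.sum_div]
        rw [Real.sqrt_div' _ (by positivity), Real.sqrt_sq (by positivity),
          EuclideanSpace.dist_eq a b]

lemma retained_finite (a b : EuclideanSpace ℝ (Fin n)) (t : ℕ)
    (M : Set (EuclideanSpace ℝ (Fin n))) : (retained a b t M).Finite :=
  (Finite.pi fun _ => finite_Iio (2 ^ t)).subset fun _ hk i _ => hk.1 i

lemma isClosed_approx (a b : EuclideanSpace ℝ (Fin n)) (t : ℕ)
    (M : Set (EuclideanSpace ℝ (Fin n))) : IsClosed (approx a b t M) :=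
  (retained_finite a b t M).isClosed_biUnion fun _ _ => isClosed_closure

lemma subset_approx {a b : EuclideanSpace ℝ (Fin n)} {M : Set (EuclideanSpace ℝ (Fin n))}
    (hM : M ⊆ boundingVoxel a b) (t : ℕ) : M ⊆ approx a b t M := fun x hx =>
  let ⟨_, hk, hxk⟩ := exists_mem_subVoxel (hM hx) t
  mem_biUnion ⟨hk, x, subset_closure hxk, hx⟩ (subset_closure hxk)

lemma closure_subset_approx {a b : EuclideanSpace ℝ (Fin n)} {M : Set (EuclideanSpace ℝ (Fin n))}
    (hM : M ⊆ boundingVoxel a b) (t : ℕ) : closure M ⊆ approx a b t M :=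
  closure_minimal (subset_approx hM t) (isClosed_approx a b t M)

lemma exists_dist_le_of_mem_approx {a b x : EuclideanSpace ℝ (Fin n)} {t : ℕ}
    {M : Set (EuclideanSpace ℝ (Fin n))} (hx : x ∈ approx a b t M) :
    ∃ y ∈ M, dist x y ≤ dist a b / 2 ^ t := by
  obtain ⟨_, ⟨-, y, hyk, hyM⟩, hxk⟩ := mem_iUnion₂.1 hx
  exact ⟨y, hyM, dist_le_of_mem_closure_subVoxel hxk hyk⟩

lemma iInter_approx_subset_closure (a b : EuclideanSpace ℝ (Fin n))
    (M : Set (EuclideanSpace ℝ (Fin n))) : ⋂ t : ℕ, approx a b t M ⊆ closure M := by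
  intro x hx
  refine Metric.mem_closure_iff.2 fun ε hε => ?_
  obtain ⟨t, ht⟩ := pow_unbounded_of_one_lt (dist a b / ε) one_lt_two
  obtain ⟨y, hyM, hxy⟩ := exists_dist_le_of_mem_approx (mem_iInter.1 hx t)
  exact ⟨y, hyM, hxy.trans_lt ((div_lt_comm₀ hε (by positivity)).1 ht)⟩

theorem iInter_approx_eq_closure_general
    (n : ℕ) (a b : EuclideanSpace ℝ (Fin n))
    (M : Set (EuclideanSpace ℝ (Fin n))) (hM : M ⊆ boundingVoxel a b) :
    (⋂ t : ℕ, approx a b t M) = closure M :=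
  (iInter_approx_subset_closure a b M).antisymm (subset_iInter (closure_subset_approx hM))

/-- if `M ⊆ V₀`, then the limit of the approximations equals `closure M`. -/
theorem iInter_approx_eq_closure
    (n : ℕ) (hn : 1 ≤ n) (a b : EuclideanSpace ℝ (Fin n)) (hab : ∀ i, a i < b i)
    (M : Set (EuclideanSpace ℝ (Fin n))) (hM : M ⊆ boundingVoxel a b) :
    (⋂ t : ℕ, approx a b t M) = closure M :=
  iInter_approx_eq_closure_general n a b M hM
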